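/- Let n ≥ 1 be a natural number, let d, d' be integers, set k := d − d' and assume 0 ≤ k ≤ n, and set λ := d / n ∈ ℚ. Let q : Fin n → ℚ be nonincreasing with ∑_i q i = d'. Let P : Fin n → ℚ be the constant tuple with value λ, and let ν : Fin n → ℚ be the tuple whose first n − k entries equal 0 and whose last k entries equal −1. Then P + ν ≥ q in the Bruhat order if and only if λ − 1 ≤ q i ≤ λ for every i. -/
import Mathlib


open Finset

/-- Partial sum of the first `j` slopes of a rationally tuplar polygon. -/
def psum {n : ℕ} (s : Fin n → ℚ) (j : ℕ) : ℚ :=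
  ∑ i : Fin n, if (i : ℕ) < j then s i else 0

/-- Bruhat order: `s ≥ t`, i.e. all partial sums of `s` dominate those of `t`,
with equality of total sums. -/
def BruhatGE {n : ℕ} (s t : Fin n → ℚ) : Prop :=
  (∀ j : ℕ, 1 ≤ j → j ≤ n → psum t j ≤ psum s j) ∧ (∑ i, t i) = (∑ i, s i)

/-- `splus` is the concave rearrangement of `s`: a nonincreasing rearrangement. -/
def IsConcaveRearr {n : ℕ} (s splus : Fin n → ℚ) : Prop :=
  (∃ σ : Equiv.Perm (Fin n), splus = s ∘ σ) ∧ Antitone splus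

/-- `u` is the direct sum `s ⊕ t`: the concave rearrangement of the concatenation. -/
def IsDSum {m n : ℕ} (s : Fin m → ℚ) (t : Fin n → ℚ) (u : Fin (m + n) → ℚ) : Prop :=
  IsConcaveRearr (Fin.append s t) u

lemma card_filter_lt_fin {n j : ℕ} (hj : j ≤ n) :
    ((univ : Finset (Fin n)).filter (fun i : Fin n => (i : ℕ) < j)).card = j := by
  rcases eq_or_lt_of_le hj with rfl | h
  · rw [Finset.filter_true_of_mem (fun i _ => i.isLt)]
    simp
  · have : (univ.filter (fun i : Fin n => (i : ℕ) < j)) = Finset.Iio ⟨j, h⟩ := by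
      ext i; simp [Fin.lt_def]
    rw [this, Fin.card_Iio]

lemma card_filter_not_lt_fin {n j : ℕ} (hj : j ≤ n) :
    ((univ : Finset (Fin n)).filter (fun i : Fin n => ¬ (i : ℕ) < j)).card = n - j := by
  have h1 := Finset.card_filter_add_card_filter_not
    (s := (univ : Finset (Fin n))) (p := fun i : Fin n => (i : ℕ) < j)
  rw [card_filter_lt_fin hj] at h1
  simp only [Finset.card_univ, Fintype.card_fin] at h1
  omega

lemma psum_filter {n : ℕ} (s : Fin n → ℚ) (j : ℕ) :
    psum s j = ∑ i ∈ univ.filter (fun i : Fin n => (i : ℕ) < j), s i :=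
  (Finset.sum_filter _ _).symm

lemma sum_split {n : ℕ} (s : Fin n → ℚ) (j : ℕ) :
    (∑ i, s i) = psum s j + ∑ i ∈ univ.filter (fun i : Fin n => ¬ (i : ℕ) < j), s i := by
  rw [psum_filter, Finset.sum_filter_add_sum_filter_not]

/-- For the HN polygon `P` of a semistable bundle of rank `n` and degree `d`
(slope `λ = d / n`) and the dual `ν` of the minuscule cocharacter of degree
`k = d - d'` with slopes `0` and `1`, the Bruhat inequality `P + ν ≥ q` is
equivalent to the slopewise bounds `λ - 1 ≤ q i ≤ λ` for all `i`. -/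
theorem semistable_minuscule_modification_criterion {n : ℕ} (hn : 1 ≤ n)
    (d d' : ℤ) (hk0 : 0 ≤ d - d') (hkn : d - d' ≤ (n : ℤ))
    (q : Fin n → ℚ) (hq : Antitone q) (hdeg : (∑ i, q i) = (d' : ℚ))
    (P ν : Fin n → ℚ)
    (hP : ∀ i, P i = (d : ℚ) / n)
    (hν : ∀ i : Fin n, ν i = if (i : ℤ) < (n : ℤ) - (d - d') then 0 else -1) :
    BruhatGE (P + ν) q ↔ ∀ i, (d : ℚ) / n - 1 ≤ q i ∧ q i ≤ (d : ℚ) / n := by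
  set lam : ℚ := (d : ℚ) / n with hlam
  set k : ℕ := (d - d').toNat with hkdef
  have hkZ : (k : ℤ) = d - d' := Int.toNat_of_nonneg hk0
  have hkn' : k ≤ n := by omega
  set m : ℕ := n - k with hmdef
  have hmn : m ≤ n := Nat.sub_le _ _
  have hmk : m + k = n := by omega
  have hnQ : (n : ℚ) ≠ 0 := by positivity
  have hnlam : (n : ℚ) * lam = (d : ℚ) := by
    rw [hlam]; field_simp
  -- entrywise formula for P + ν
  have hPν : ∀ i : Fin n, (P + ν) i = if (i : ℕ) < m then lam else lam - 1 := by
    intro i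
    have hiff : ((i : ℕ) < m) ↔ ((i : ℤ) < (n : ℤ) - (d - d')) := by omega
    rw [Pi.add_apply, hP, hν]
    by_cases h : (i : ℕ) < m
    · rw [if_pos (hiff.mp h), if_pos h]; ring
    · rw [if_neg (fun hh => h (hiff.mpr hh)), if_neg h]; ring
  have hk' : (k : ℚ) = (d : ℚ) - (d' : ℚ) := by exact_mod_cast hkZ
  have hm' : ((m : ℚ) + k) = (n : ℚ) := by exact_mod_cast hmk
  -- total sum of P + ν
  have hsumPν : (∑ i, (P + ν) i) = (d' : ℚ) := by
    rw [Finset.sum_congr rfl (fun i _ => hPν i), Finset.sum_ite, Finset.sum_const,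
      Finset.sum_const, card_filter_lt_fin hmn, card_filter_not_lt_fin hmn]
    have hnm : (n - m : ℕ) = k := by omega
    rw [hnm]
    simp only [nsmul_eq_mul]
    linear_combination lam * hm' + hnlam - hk'
  have hboth : ∀ i : Fin n, lam - 1 ≤ (P + ν) i ∧ (P + ν) i ≤ lam := by
    intro i
    rw [hPν i]
    by_cases hi : (i : ℕ) < m
    · rw [if_pos hi]; constructor <;> linarith
    · rw [if_neg hi]; constructor <;> linarith
  -- psum of P + ν for j ≤ m
  have hA : ∀ j : ℕ, j ≤ m → psum (P + ν) j = j * lam := by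
    intro j hj
    have hconst : ∑ i ∈ univ.filter (fun i : Fin n => (i : ℕ) < j), (P + ν) i
        = ∑ _i ∈ univ.filter (fun i : Fin n => (i : ℕ) < j), lam := by
      refine Finset.sum_congr rfl (fun i hi => ?_)
      simp only [Finset.mem_filter, Finset.mem_univ, true_and] at hi
      rw [hPν i, if_pos (by omega)]
    rw [psum_filter, hconst, Finset.sum_const, card_filter_lt_fin (hj.trans hmn),
      nsmul_eq_mul]
  -- complement sum of P + ν for m ≤ j ≤ n
  have hB : ∀ j : ℕ, m ≤ j → j ≤ n →
      (∑ i, (P + ν) i) - psum (P + ν) j = (n - j : ℕ) * (lam - 1) := by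
    intro j hmj hjn
    have hconst : ∑ i ∈ univ.filter (fun i : Fin n => ¬ (i : ℕ) < j), (P + ν) i
        = ∑ _i ∈ univ.filter (fun i : Fin n => ¬ (i : ℕ) < j), (lam - 1) := by
      refine Finset.sum_congr rfl (fun i hi => ?_)
      simp only [Finset.mem_filter, Finset.mem_univ, true_and] at hi
      rw [hPν i, if_neg (by omega)]
    rw [sum_split (P + ν) j, hconst, Finset.sum_const, card_filter_not_lt_fin hjn,
      nsmul_eq_mul]
    ring
  constructor
  · rintro ⟨h1, h2⟩ i
    rw [hdeg] at h2
    constructor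
    · -- lower bound via last entry
      have hlast : i ≤ (⟨n - 1, by omega⟩ : Fin n) := by
        rw [Fin.le_def]; simp; omega
      have hqi : q ⟨n - 1, by omega⟩ ≤ q i := hq hlast
      have hsplit := sum_split q (n - 1)
      have hsingle : ((univ : Finset (Fin n)).filter (fun i : Fin n => ¬ (i : ℕ) < n - 1))
          = {⟨n - 1, by omega⟩} := by
        ext x
        simp only [Finset.mem_filter, Finset.mem_univ, true_and, Finset.mem_singleton,
          Fin.ext_iff]
        omega
      rw [hsingle, Finset.sum_singleton] at hsplit
      have hPνsplit := sum_split (P + ν) (n - 1)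
      rw [hsingle, Finset.sum_singleton] at hPνsplit
      have hps : psum q (n - 1) ≤ psum (P + ν) (n - 1) := by
        rcases Nat.lt_or_ge 1 n with h | h
        · exact h1 (n - 1) (by omega) (by omega)
        · have hz : n - 1 = 0 := by omega
          rw [hz]
          simp [psum]
      have hlb : lam - 1 ≤ (P + ν) ⟨n - 1, by omega⟩ := (hboth _).1
      linarith [hsplit, hPνsplit, h2, hdeg]
    · -- upper bound via first entry
      have hfirst : (⟨0, by omega⟩ : Fin n) ≤ i := by
        rw [Fin.le_def]; simp
      have hqi : q i ≤ q ⟨0, by omega⟩ := hq hfirst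
      have hsingle1 : ((univ : Finset (Fin n)).filter (fun i : Fin n => (i : ℕ) < 1))
          = {⟨0, by omega⟩} := by
        ext x
        simp only [Finset.mem_filter, Finset.mem_univ, true_and, Finset.mem_singleton,
          Fin.ext_iff]
        omega
      have hq1 : psum q 1 = q ⟨0, by omega⟩ := by
        rw [psum_filter, hsingle1, Finset.sum_singleton]
      have hPν1 : psum (P + ν) 1 = (P + ν) ⟨0, by omega⟩ := by
        rw [psum_filter, hsingle1, Finset.sum_singleton]
      have hub : (P + ν) ⟨0, by omega⟩ ≤ lam := (hboth _).2
      have := h1 1 le_rfl hn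
      linarith [hq1, hPν1]
  · intro h
    refine ⟨fun j hj1 hjn => ?_, by rw [hdeg, hsumPν]⟩
    by_cases hjm : j ≤ m
    · rw [hA j hjm, psum_filter]
      calc ∑ i ∈ univ.filter (fun i : Fin n => (i : ℕ) < j), q i
          ≤ (univ.filter (fun i : Fin n => (i : ℕ) < j)).card • lam :=
            Finset.sum_le_card_nsmul _ _ _ (fun i _ => (h i).2)
        _ = j * lam := by rw [card_filter_lt_fin hjn, nsmul_eq_mul]
    · push_neg at hjm
      have hsplitq := sum_split q j
      have hlow : ((n - j : ℕ) : ℚ) * (lam - 1) ≤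
          ∑ i ∈ univ.filter (fun i : Fin n => ¬ (i : ℕ) < j), q i := by
        calc ((n - j : ℕ) : ℚ) * (lam - 1)
            = (univ.filter (fun i : Fin n => ¬ (i : ℕ) < j)).card • (lam - 1) := by
              rw [card_filter_not_lt_fin hjn, nsmul_eq_mul]
          _ ≤ _ := Finset.card_nsmul_le_sum _ _ _ (fun i _ => (h i).1)
      have hBj := hB j (le_of_lt hjm) hjn
      linarith [hsplitq, hBj, hdeg.trans hsumPν.symm]
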